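/- Let π ∈ S_n avoid 132. Then for every r, the number of elements of the right weak order interval [e, π] with Coxeter length r equals the number of elements of [e, π] with Coxeter length ℓ(π) - r (the interval is rank-symmetric). -/

import Mathlib

open Equiv

/-- The adjacent transposition `s i`, swapping positions `i` and `i+1` (0-indexed). -/
def simpleT {n : ℕ} (i : Fin n) : Equiv.Perm (Fin (n+1)) := Equiv.swap i.castSucc i.succ

/-- Coxeter length: minimal length of a word in adjacent transpositions. -/
noncomputable def len {n : ℕ} (σ : Equiv.Perm (Fin (n+1))) : ℕ :=
  sInf {k | ∃ l : List (Fin n), l.length = k ∧ (l.map simpleT).prod = σ}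

/-- The inversion set of `σ`: pairs of values `(σ i, σ j)` with `i < j` and `σ i > σ j`. -/
def invSet {m : ℕ} (σ : Equiv.Perm (Fin m)) : Set (Fin m × Fin m) :=
  {p | ∃ i j : Fin m, i < j ∧ σ j < σ i ∧ p = (σ i, σ j)}

/-- The right weak Bruhat order, characterized by containment of inversion sets. -/
def wle {m : ℕ} (σ π : Equiv.Perm (Fin m)) : Prop := invSet σ ⊆ invSet π

/-- `σ` contains the pattern 132. -/
def contains132 {m : ℕ} (σ : Equiv.Perm (Fin m)) : Prop :=
  ∃ i₁ i₂ i₃ : Fin m, i₁ < i₂ ∧ i₂ < i₃ ∧ σ i₁ < σ i₃ ∧ σ i₃ < σ i₂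

/-!
If `π` avoids `132` and `M` is its largest entry, write `π = P M S`; avoidance forces every entry
of `P M` to exceed every entry of `S`. An element `σ ≤ π` then amounts to an element of
`[e, P M]`, an element of `[e, S]` and an arbitrary shuffle pattern recording where the large
entries sit, and its length is the sum of the three lengths. As `M` cannot move, `[e, P M]` is a
copy of `[e, P]`. So the rank generating function of `[e, π]` is the product of those of `[e, P]`
and `[e, S]` with a Gaussian binomial coefficient. Reversing a shuffle pattern complements its
length, so the Gaussian binomial is palindromic, and by induction so is the product.

Permutations are handled through their one-line words, on which the Coxeter length is the number
of inversions and the weak order is containment of inversion sets (taken on values).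
-/

namespace RankSymmetry

open List Polynomial

section Inversions

variable {α : Type*} [LinearOrder α]

def invPairs : List α → List (α × α)
  | [] => []
  | x :: xs => (xs.filter (· < x)).map (x, ·) ++ invPairs xs

def invCount (l : List α) : ℕ := (invPairs l).length

@[simp] lemma invCount_nil : invCount ([] : List α) = 0 := rfl

lemma invCount_cons (x : α) (xs : List α) :
    invCount (x :: xs) = xs.countP (· < x) + invCount xs := by
  simp [invCount, invPairs, countP_eq_length_filter]

lemma mem_invPairs {l : List α} {a b : α} : (a, b) ∈ invPairs l ↔ b < a ∧ [a, b] <+ l := by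
  induction l with
  | nil => simp [invPairs]
  | cons x xs ih =>
    simp only [invPairs, mem_append, mem_map, mem_filter, ih, Prod.mk.injEq, decide_eq_true_eq,
      sublist_cons_iff, cons.injEq]
    constructor
    · rintro (⟨y, ⟨hy, hyx⟩, rfl, rfl⟩ | ⟨hba, h⟩)
      · exact ⟨hyx, Or.inr ⟨[y], ⟨rfl, rfl⟩, singleton_sublist.2 hy⟩⟩
      · exact ⟨hba, Or.inl h⟩
    · rintro ⟨hba, h | ⟨r, ⟨rfl, rfl⟩, hb⟩⟩
      · exact Or.inr ⟨hba, h⟩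
      · exact Or.inl ⟨b, ⟨singleton_sublist.1 hb, hba⟩, rfl, rfl⟩

lemma invPairs_subset_of_sublist {l l' : List α} (h : l' <+ l) : invPairs l' ⊆ invPairs l :=
  fun ⟨_, _⟩ hq => mem_invPairs.2 ⟨(mem_invPairs.1 hq).1, (mem_invPairs.1 hq).2.trans h⟩

lemma mem_invPairs_filter {l : List α} {p : α → Bool} {a b : α} :
    (a, b) ∈ invPairs (l.filter p) ↔ (a, b) ∈ invPairs l ∧ p a ∧ p b := by
  have : [a, b] <+ l.filter p ↔ [a, b] <+ l ∧ p a ∧ p b := by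
    refine ⟨fun h => ⟨h.trans filter_sublist, ?_, ?_⟩, fun ⟨h, ha, hb⟩ => ?_⟩
    · exact (mem_filter.1 (h.subset (by simp))).2
    · exact (mem_filter.1 (h.subset (by simp))).2
    · simpa [ha, hb] using h.filter p
  simp only [mem_invPairs, this]
  tauto

lemma invCount_append_singleton (u : List α) (v : α) :
    invCount (u ++ [v]) = invCount u + u.countP (v < ·) := by
  induction u with
  | nil => simp [invCount_cons]
  | cons x xs ih =>
    simp only [cons_append, invCount_cons, ih, countP_append, countP_cons, countP_nil]
    by_cases h : v < x <;> simp [h] <;> omega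

lemma invCount_append_cons_cons (l₁ l₂ : List α) {a b : α} (h : b < a) :
    invCount (l₁ ++ a :: b :: l₂) = invCount (l₁ ++ b :: a :: l₂) + 1 := by
  induction l₁ with
  | nil => simp [invCount_cons, h, h.not_gt]; omega
  | cons x l₁ ih => simp [invCount_cons, countP_append, countP_cons, ih]; omega

lemma invCount_append_of_lt {t b : List α} (hlt : ∀ x ∈ t, ∀ y ∈ b, y < x) :
    invCount (t ++ b) = invCount t + invCount b + t.length * b.length := by
  induction t with
  | nil => simp
  | cons x t ih =>
    have hxb : b.countP (· < x) = b.length := countP_eq_length.2 fun y hy => by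
      simpa using hlt x mem_cons_self y hy
    rw [cons_append, invCount_cons, invCount_cons, countP_append, hxb,
      ih fun a ha => hlt a (mem_cons_of_mem x ha), length_cons]
    ring

/-- Under `h`, each letter satisfying `p` followed by one that does not is an inversion of `w`;
these are exactly the inversions of the mask `w.map p` (where `false < true`). -/
lemma invCount_eq_filter_add_filter_add_map (p : α → Bool) (w : List α)
    (h : ∀ x ∈ w, ∀ y ∈ w, p x → p y = false → y < x) :
    invCount w = invCount (w.filter p) + invCount (w.filter (!p ·)) + invCount (w.map p) := by
  induction w with
  | nil => rfl
  | cons x xs ih =>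
    have h' : ∀ a ∈ xs, ∀ b ∈ xs, p a → p b = false → b < a :=
      fun a ha b hb => h a (mem_cons_of_mem x ha) b (mem_cons_of_mem x hb)
    rw [invCount_cons, ih h', countP_eq_countP_filter_add xs _ p]
    cases hx : p x
    · have hnone : (xs.filter p).countP (· < x) = 0 := countP_eq_zero.2 fun y hy => by
        obtain ⟨hy, hpy⟩ := mem_filter.1 hy
        simpa using (h y (mem_cons_of_mem x hy) x mem_cons_self hpy hx).le
      simp [hx, invCount_cons, hnone, Bool.lt_iff]
      omega
    · have hall : (xs.filter (!p ·)).countP (· < x) = xs.countP (fun y => p y = false) := by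
        rw [countP_eq_length.2, ← countP_eq_length_filter]
        · simp
        · intro y hy
          simp only [mem_filter, Bool.not_eq_true'] at hy
          simpa using h x mem_cons_self y (mem_cons_of_mem x hy.1) hx hy.2
      simp [hx, invCount_cons, hall, Function.comp_def, Bool.lt_iff]
      omega

lemma invPairs_append_of_forall_lt {u : List α} {M : α} (h : ∀ a ∈ u, a < M) :
    invPairs (u ++ [M]) = invPairs u := by
  induction u with
  | nil => rfl
  | cons x xs ih =>
    simp [invPairs, ih fun a ha => h a (mem_cons_of_mem x ha), (h x mem_cons_self).not_gt]

lemma invCount_append_of_forall_lt {u : List α} {M : α} (h : ∀ a ∈ u, a < M) :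
    invCount (u ++ [M]) = invCount u := by
  rw [invCount, invPairs_append_of_forall_lt h, invCount]

lemma invCount_add_invCount_reverse (m : List Bool) :
    invCount m + invCount m.reverse = m.count true * m.count false := by
  induction m with
  | nil => rfl
  | cons e m ih =>
    rw [reverse_cons, invCount_cons, invCount_append_singleton, countP_reverse]
    cases e <;> simp [Bool.lt_iff, count_eq_countP] at ih ⊢ <;> grind

end Inversions

section Interleave

variable {α : Type*}

def interleave : List Bool → List α → List α → List α
  | true :: m, x :: t, b => x :: interleave m t b
  | false :: m, t, y :: b => y :: interleave m t b
  | _, _, _ => []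

lemma interleave_map_filter (p : α → Bool) (w : List α) :
    interleave (w.map p) (w.filter p) (w.filter (!p ·)) = w := by
  induction w with
  | nil => rfl
  | cons x xs ih => cases hx : p x <;> simp [hx, interleave, ih]

lemma interleave_spec {p : α → Bool} {m : List Bool} {t b : List α}
    (ht : ∀ x ∈ t, p x) (hb : ∀ y ∈ b, p y = false)
    (hmt : m.count true = t.length) (hmb : m.count false = b.length) :
    (interleave m t b).map p = m ∧ (interleave m t b).filter p = t ∧
      (interleave m t b).filter (!p ·) = b := by
  induction m generalizing t b with
  | nil =>
    rw [length_eq_zero_iff.1 hmt.symm, length_eq_zero_iff.1 hmb.symm]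
    simp [interleave]
  | cons e m ih =>
    cases e
    · obtain _ | ⟨y, b⟩ := b
      · simp at hmb
      have hy := hb y mem_cons_self
      obtain ⟨h₁, h₂, h₃⟩ := ih ht (fun z hz => hb z (mem_cons_of_mem y hz))
        (by simpa using hmt) (by simpa using hmb)
      simp [interleave, hy, h₁, h₂, h₃]
    · obtain _ | ⟨x, t⟩ := t
      · simp at hmt
      have hx := ht x mem_cons_self
      obtain ⟨h₁, h₂, h₃⟩ := ih (fun z hz => ht z (mem_cons_of_mem x hz)) hb
        (by simpa using hmt) (by simpa using hmb)
      simp [interleave, hx, h₁, h₂, h₃]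

lemma filter_append_block {p : α → Bool} {t b : List α} (hpt : ∀ x ∈ t, p x)
    (hpb : ∀ y ∈ b, p y = false) :
    (t ++ b).filter p = t ∧ (t ++ b).filter (!p ·) = b ∧
      (t ++ b).map p = replicate t.length true ++ replicate b.length false := by
  refine ⟨?_, ?_, ?_⟩
  · rw [filter_append, filter_eq_self.2 hpt, filter_eq_nil_iff.2 (by simpa using hpb), append_nil]
  · rw [filter_append, filter_eq_nil_iff.2 (by simpa using hpt),
      filter_eq_self.2 (by simpa using hpb), nil_append]
  · rw [map_append, map_congr_left hpt, map_congr_left hpb, map_const', map_const']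

lemma mem_append_block {p : α → Bool} {t b : List α} (hpt : ∀ x ∈ t, p x)
    (hpb : ∀ y ∈ b, p y = false) {z : α} (hz : z ∈ t ++ b) :
    (p z → z ∈ t) ∧ (p z = false → z ∈ b) := by
  rcases mem_append.1 hz with h | h <;> simp [h, hpt, hpb]

lemma interleave_spec_of_perm {p : α → Bool} {t b t' b' : List α} {m : List Bool}
    (hpt : ∀ x ∈ t, p x) (hpb : ∀ y ∈ b, p y = false) (ht' : t' ~ t) (hb' : b' ~ b)
    (hm : m ~ replicate t.length true ++ replicate b.length false) :
    (interleave m t' b').map p = m ∧ (interleave m t' b').filter p = t' ∧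
      (interleave m t' b').filter (!p ·) = b' :=
  interleave_spec (fun x hx => hpt x (ht'.subset hx)) (fun y hy => hpb y (hb'.subset hy))
    (by simp [hm.count_eq, ht'.length_eq, count_replicate])
    (by simp [hm.count_eq, hb'.length_eq, count_replicate])

end Interleave

section LowerInterval

variable {α : Type*} [LinearOrder α]

def lowerInterval (l : List α) : Finset (List α) :=
  l.permutations.toFinset.filter (invPairs · ⊆ invPairs l)

lemma mem_lowerInterval {w l : List α} :
    w ∈ lowerInterval l ↔ w ~ l ∧ invPairs w ⊆ invPairs l := by
  simp [lowerInterval, mem_permutations]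

noncomputable def rankPoly (l : List α) : ℕ[X] :=
  ∑ w ∈ lowerInterval l, X ^ invCount w

/-- The Gaussian binomial coefficient `[a + b choose a]_q`. -/
noncomputable def shufflePoly (a b : ℕ) : ℕ[X] :=
  ∑ m ∈ (replicate a true ++ replicate b false).permutations.toFinset, X ^ invCount m

lemma filter_mem_lowerInterval {w l : List α} (h : w ∈ lowerInterval l) (p : α → Bool) :
    w.filter p ∈ lowerInterval (l.filter p) := by
  rw [mem_lowerInterval] at h ⊢
  refine ⟨h.1.filter p, fun ⟨a, b⟩ hq => ?_⟩
  rw [mem_invPairs_filter] at hq ⊢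
  exact ⟨h.2 hq.1, hq.2⟩

lemma interleave_mem_lowerInterval {p : α → Bool} {t b t' b' : List α} {m : List Bool}
    (hpt : ∀ x ∈ t, p x) (hpb : ∀ y ∈ b, p y = false) (hlt : ∀ x ∈ t, ∀ y ∈ b, y < x)
    (ht' : t' ∈ lowerInterval t) (hb' : b' ∈ lowerInterval b)
    (hm : m ~ replicate t.length true ++ replicate b.length false) :
    interleave m t' b' ∈ lowerInterval (t ++ b) := by
  rw [mem_lowerInterval] at ht' hb' ⊢
  obtain ⟨-, htop, hbot⟩ := interleave_spec_of_perm hpt hpb ht'.1 hb'.1 hm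
  set w := interleave m t' b'
  have hperm : w ~ t ++ b := by
    refine (filter_append_perm p w).symm.trans ?_
    rw [htop, hbot]
    exact ht'.1.append hb'.1
  refine ⟨hperm, fun ⟨x, y⟩ hxy => ?_⟩
  obtain ⟨hyx, hxyw⟩ := mem_invPairs.1 hxy
  have hx := mem_append_block hpt hpb (hperm.subset (hxyw.subset (by simp : x ∈ [x, y])))
  have hy := mem_append_block hpt hpb (hperm.subset (hxyw.subset (by simp : y ∈ [x, y])))
  cases hpx : p x <;> cases hpy : p y
  · have := (mem_invPairs_filter (p := (!p ·))).2 ⟨hxy, by simp [hpx], by simp [hpy]⟩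
    rw [hbot] at this
    exact invPairs_subset_of_sublist (sublist_append_right t b) (hb'.2 this)
  · exact (hyx.asymm (hlt y (hy.1 hpy) x (hx.2 hpx))).elim
  · exact mem_invPairs.2 ⟨hyx, (singleton_sublist.2 (hx.1 hpx)).append
      (singleton_sublist.2 (hy.2 hpy))⟩
  · have := mem_invPairs_filter.2 ⟨hxy, hpx, hpy⟩
    rw [htop] at this
    exact invPairs_subset_of_sublist (sublist_append_left t b) (ht'.2 this)

theorem rankPoly_append_of_lt {t b : List α} (hlt : ∀ x ∈ t, ∀ y ∈ b, y < x) :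
    rankPoly (t ++ b) = rankPoly t * rankPoly b * shufflePoly t.length b.length := by
  set p : α → Bool := fun x => decide (x ∈ t)
  have hpt : ∀ x ∈ t, p x := by simp [p]
  have hpb : ∀ y ∈ b, p y = false := fun y hy => by
    simpa [p] using fun h => lt_irrefl y (hlt y h y hy)
  obtain ⟨htop, hbot, hmask⟩ := filter_append_block hpt hpb
  simp only [rankPoly, shufflePoly, Finset.sum_mul_sum, ← Finset.sum_product', ← pow_add]
  refine Finset.sum_nbij' (fun w => ((w.filter p, w.filter (!p ·)), w.map p))
    (fun q => interleave q.2 q.1.1 q.1.2) ?_ ?_ ?_ ?_ ?_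
  · intro w hw
    simp only [Finset.mem_product, mem_toFinset, mem_permutations]
    refine ⟨⟨?_, ?_⟩, ?_⟩
    · simpa [htop] using filter_mem_lowerInterval hw p
    · simpa [hbot] using filter_mem_lowerInterval hw (!p ·)
    · rw [← hmask]
      exact (mem_lowerInterval.1 hw).1.map p
  · rintro ⟨⟨t', b'⟩, m⟩ h
    simp only [Finset.mem_product, mem_toFinset, mem_permutations] at h
    exact interleave_mem_lowerInterval hpt hpb hlt h.1.1 h.1.2 h.2
  · intro w _
    exact interleave_map_filter p w
  · rintro ⟨⟨t', b'⟩, m⟩ h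
    simp only [Finset.mem_product, mem_toFinset, mem_permutations] at h
    obtain ⟨hmap, htop', hbot'⟩ := interleave_spec_of_perm hpt hpb
      (mem_lowerInterval.1 h.1.1).1 (mem_lowerInterval.1 h.1.2).1 h.2
    rw [hmap, htop', hbot']
  · intro w hw
    have hperm := (mem_lowerInterval.1 hw).1
    rw [invCount_eq_filter_add_filter_add_map p w fun x hx y hy hpx hpy =>
      hlt x ((mem_append_block hpt hpb (hperm.subset hx)).1 hpx)
        y ((mem_append_block hpt hpb (hperm.subset hy)).2 hpy)]

lemma lowerInterval_append_of_forall_lt {P : List α} {M : α} (h : ∀ a ∈ P, a < M) :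
    lowerInterval (P ++ [M]) = (lowerInterval P).image (· ++ [M]) := by
  ext w
  simp only [Finset.mem_image, mem_lowerInterval, invPairs_append_of_forall_lt h]
  constructor
  · rintro ⟨hw, hinv⟩
    obtain ⟨s, r, rfl⟩ := append_of_mem (hw.symm.subset (mem_append_right P (mem_singleton_self M)))
    have hMP : M ∉ P := fun hM => lt_irrefl M (h M hM)
    obtain _ | ⟨c, r⟩ := r
    · have hs : s ~ P := (perm_append_right_iff [M]).1 hw
      rw [invPairs_append_of_forall_lt fun a ha => h a (hs.subset ha)] at hinv
      exact ⟨s, ⟨hs, hinv⟩, rfl⟩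
    · have hcM : c ≠ M := by
        rintro rfl
        have := hw.count_eq c
        simp [count_append, count_eq_zero_of_not_mem hMP] at this
        omega
      have hcP : c ∈ P := by
        simpa [hcM] using hw.subset (mem_append_right s (mem_cons_of_mem M mem_cons_self))
      have hinvMc : (M, c) ∈ invPairs P := hinv (mem_invPairs.2 ⟨h c hcP,
        sublist_append_of_sublist_right (cons_sublist_cons.2 (singleton_sublist.2 mem_cons_self))⟩)
      exact (hMP ((mem_invPairs.1 hinvMc).2.subset (by simp))).elim
  · rintro ⟨u, ⟨hu, hinv⟩, rfl⟩
    refine ⟨hu.append_right [M], ?_⟩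
    rwa [invPairs_append_of_forall_lt fun a ha => h a (hu.subset ha)]

lemma rankPoly_append_of_forall_lt {P : List α} {M : α} (h : ∀ a ∈ P, a < M) :
    rankPoly (P ++ [M]) = rankPoly P := by
  rw [rankPoly, lowerInterval_append_of_forall_lt h,
    Finset.sum_image fun _ _ _ _ => append_cancel_right]
  refine Finset.sum_congr rfl fun u hu => ?_
  rw [invCount_append_of_forall_lt fun a ha => h a ((mem_lowerInterval.1 hu).1.subset ha)]

end LowerInterval

section Palindromic

variable {R ι : Type*} [Semiring R]

/-- `reflect N` leaves coefficients above degree `N` in place, so the degree bound is not implied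
by the second condition. -/
def IsPalindromic (N : ℕ) (f : R[X]) : Prop := f.natDegree ≤ N ∧ reflect N f = f

lemma IsPalindromic.mul {N M : ℕ} {f g : R[X]} (hf : IsPalindromic N f)
    (hg : IsPalindromic M g) : IsPalindromic (N + M) (f * g) :=
  ⟨natDegree_mul_le.trans (add_le_add hf.1 hg.1), by rw [reflect_mul f g hf.1 hg.1, hf.2, hg.2]⟩

lemma reflect_sum (N : ℕ) (s : Finset ι) (f : ι → R[X]) :
    reflect N (∑ i ∈ s, f i) = ∑ i ∈ s, reflect N (f i) := by
  induction s using Finset.cons_induction <;> simp [*]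

lemma isPalindromic_sum_X_pow {s : Finset ι} {f : ι → ℕ} {N : ℕ} (g : ι → ι)
    (hg : ∀ i ∈ s, g i ∈ s) (hgg : ∀ i ∈ s, g (g i) = i) (hfg : ∀ i ∈ s, f i + f (g i) = N) :
    IsPalindromic N (∑ i ∈ s, (X : R[X]) ^ f i) := by
  refine ⟨natDegree_sum_le_of_forall_le _ _ fun i hi =>
    (natDegree_X_pow_le _).trans (by have := hfg i hi; omega), ?_⟩
  rw [reflect_sum]
  refine Finset.sum_nbij' g g hg hg hgg hgg fun i hi => ?_
  have := hfg i hi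
  rw [reflect_monomial, revAt_le (by omega), show N - f i = f (g i) by omega]

lemma coeff_sum_X_pow (s : Finset ι) (f : ι → ℕ) (r : ℕ) :
    (∑ i ∈ s, (X : ℕ[X]) ^ f i).coeff r = (s.filter (f · = r)).card := by
  rw [finsetSum_coeff, Finset.card_filter]
  exact Finset.sum_congr rfl fun i _ => by simp [coeff_X_pow, eq_comm]

lemma IsPalindromic.card_filter_eq {s : Finset ι} {f : ι → ℕ} {N : ℕ}
    (h : IsPalindromic N (∑ i ∈ s, (X : ℕ[X]) ^ f i)) (r : ℕ) :
    (s.filter (f · = r)).card = (s.filter (f · + r = N)).card := by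
  rcases le_or_gt r N with hr | hr
  · have hcongr : s.filter (f · + r = N) = s.filter (f · = N - r) :=
      Finset.filter_congr fun i _ => by omega
    rw [hcongr, ← coeff_sum_X_pow, ← coeff_sum_X_pow]
    conv_lhs => rw [← h.2]
    rw [coeff_reflect, revAt_le hr]
  · rw [← coeff_sum_X_pow, coeff_eq_zero_of_natDegree_lt (h.1.trans_lt hr),
      Finset.filter_false_of_mem fun i _ => by omega, Finset.card_empty]

lemma isPalindromic_shufflePoly (a b : ℕ) : IsPalindromic (a * b) (shufflePoly a b) :=
  isPalindromic_sum_X_pow reverse (by simp [mem_permutations]) (by simp) fun m hm => by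
    rw [mem_toFinset, mem_permutations] at hm
    simp [invCount_add_invCount_reverse, hm.count_eq, count_replicate]

end Palindromic

section Pattern

variable {α : Type*} [LinearOrder α]

def Contains132 (l : List α) : Prop := ∃ a b c, a < b ∧ b < c ∧ [a, c, b] <+ l

lemma Contains132.of_sublist {l l' : List α} (h : Contains132 l') (hl : l' <+ l) :
    Contains132 l :=
  let ⟨a, b, c, hab, hbc, hs⟩ := h
  ⟨a, b, c, hab, hbc, hs.trans hl⟩

lemma exists_split_at_max {l : List α} (hne : l ≠ []) (hl : l.Nodup) (h : ¬Contains132 l) :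
    ∃ P M S, l = P ++ M :: S ∧ (∀ a ∈ P, a < M) ∧ ∀ a ∈ P ++ [M], ∀ c ∈ S, c < a := by
  obtain ⟨M, hM, hmax⟩ := l.toFinset.exists_max_image id (by simpa using hne)
  simp only [mem_toFinset, id] at hM hmax
  obtain ⟨P, S, rfl⟩ := append_of_mem hM
  rw [nodup_append, nodup_cons] at hl
  obtain ⟨-, ⟨hMS, -⟩, hdisj⟩ := hl
  have hPM : ∀ a ∈ P, a < M := fun a ha =>
    (hmax a (by simp [ha])).lt_of_ne (hdisj a ha M mem_cons_self)
  refine ⟨P, M, S, rfl, hPM, fun a ha c hc => ?_⟩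
  have hcM : c < M := (hmax c (by simp [hc])).lt_of_ne fun h => hMS (h ▸ hc)
  rcases mem_append.1 ha with ha | ha
  · refine (hdisj a ha c (mem_cons_of_mem M hc)).symm.lt_of_le (not_lt.1 fun hac => h ?_)
    exact ⟨a, c, M, hac, hcM, (singleton_sublist.2 ha).append
      (cons_sublist_cons.2 (singleton_sublist.2 hc))⟩
  · rwa [mem_singleton.1 ha]

theorem isPalindromic_rankPoly {l : List α} (hl : l.Nodup) (h : ¬Contains132 l) :
    IsPalindromic (invCount l) (rankPoly l) := by
  induction hn : l.length using Nat.strong_induction_on generalizing l with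
  | _ n ih =>
    rcases eq_or_ne l [] with rfl | hne
    · simp [IsPalindromic, rankPoly, lowerInterval, Finset.filter_singleton]
    obtain ⟨P, M, S, rfl, hPM, hlt⟩ := exists_split_at_max hne hl h
    have hPal : ∀ l', l' <+ P ++ M :: S → l'.length < n →
        IsPalindromic (invCount l') (rankPoly l') := fun l' hl' hlen =>
      ih _ hlen (hl.sublist hl') (fun hc => h (hc.of_sublist hl')) rfl
    have hP := hPal P (sublist_append_left P _) (by simp [← hn])
    have hS := hPal S (sublist_append_of_sublist_right (sublist_cons_self M S))
      (by simp [← hn]; omega)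
    rw [show P ++ M :: S = P ++ [M] ++ S by simp, rankPoly_append_of_lt hlt,
      rankPoly_append_of_forall_lt hPM, invCount_append_of_lt hlt,
      invCount_append_of_forall_lt hPM]
    exact (hP.mul hS).mul (isPalindromic_shufflePoly _ _)

end Pattern

section OfFn

variable {α : Type*}

lemma pair_sublist_ofFn_iff {m : ℕ} {f : Fin m → α} {a b : α} :
    [a, b] <+ ofFn f ↔ ∃ i j, i < j ∧ f i = a ∧ f j = b := by
  induction m with
  | zero => simp
  | succ m ih =>
    simp [ofFn_succ, sublist_cons_iff, ih, Fin.exists_fin_succ, Fin.succ_lt_succ_iff, eq_comm,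
      or_comm]

lemma triple_sublist_ofFn_iff {m : ℕ} {f : Fin m → α} {a b c : α} :
    [a, b, c] <+ ofFn f ↔ ∃ i j k, i < j ∧ j < k ∧ f i = a ∧ f j = b ∧ f k = c := by
  induction m with
  | zero => simp
  | succ m ih =>
    simp [ofFn_succ, sublist_cons_iff, ih, pair_sublist_ofFn_iff, Fin.exists_fin_succ,
      Fin.succ_lt_succ_iff, eq_comm, or_comm]
    constructor
    · rintro (⟨rfl, i, j, hij, rfl, rfl⟩ | h)
      · exact .inl ⟨i, j, hij, rfl, rfl, rfl⟩
      · exact .inr h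
    · rintro (⟨i, j, hij, rfl, rfl, rfl⟩ | h)
      · exact .inl ⟨rfl, i, j, hij, rfl, rfl⟩
      · exact .inr h

lemma ofFn_comp_swap {n : ℕ} (f : Fin (n + 1) → α) (i : Fin n) :
    ∃ l₁ l₂, ofFn f = l₁ ++ f i.castSucc :: f i.succ :: l₂ ∧
      ofFn (f ∘ swap i.castSucc i.succ) = l₁ ++ f i.succ :: f i.castSucc :: l₂ := by
  induction n with
  | zero => exact i.elim0
  | succ n ih =>
    cases i using Fin.cases with
    | zero =>
      refine ⟨[], ofFn fun j => f j.succ.succ, by simp [ofFn_succ], ?_⟩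
      have h : ∀ j : Fin n, swap (0 : Fin (n + 2)) 1 j.succ.succ = j.succ.succ := fun j =>
        swap_apply_of_ne_of_ne (Fin.succ_ne_zero _) ((Fin.succ_injective _).ne (Fin.succ_ne_zero j))
      simp [ofFn_succ, h]
    | succ j =>
      obtain ⟨l₁, l₂, h₁, h₂⟩ := ih (f ∘ Fin.succ) j
      have hsucc : (f ∘ swap j.succ.castSucc j.succ.succ) ∘ Fin.succ =
          (f ∘ Fin.succ) ∘ swap j.castSucc j.succ := by
        ext x
        simp [(Fin.succ_injective _).swap_apply]
      refine ⟨f 0 :: l₁, l₂, ?_, ?_⟩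
      · rw [ofFn_succ, ← Function.comp_def, h₁]
        simp
      · rw [ofFn_succ, ← Function.comp_def (f ∘ _) Fin.succ, hsucc, h₂]
        simp [swap_apply_of_ne_of_ne (Fin.succ_ne_zero _).symm (Fin.succ_ne_zero _).symm]

lemma invCount_ofFn_of_strictMono [LinearOrder α] {m : ℕ} {f : Fin m → α} (hf : StrictMono f) :
    invCount (ofFn f) = 0 := by
  rw [invCount, length_eq_zero_iff, eq_nil_iff_forall_not_mem]
  rintro ⟨a, b⟩ h
  obtain ⟨hba, i, j, hij, rfl, rfl⟩ := by simpa only [pair_sublist_ofFn_iff] using mem_invPairs.1 h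
  exact (hf hij).not_gt hba

end OfFn

section Permutations

variable {m n : ℕ}

lemma mem_invPairs_ofFn {σ : Equiv.Perm (Fin m)} {q : Fin m × Fin m} :
    q ∈ invPairs (ofFn σ) ↔ q ∈ invSet σ := by
  obtain ⟨a, b⟩ := q
  simp only [mem_invPairs, pair_sublist_ofFn_iff, invSet, Set.mem_ofPred_eq, Prod.mk.injEq]
  constructor
  · rintro ⟨hba, i, j, hij, rfl, rfl⟩
    exact ⟨i, j, hij, hba, rfl, rfl⟩
  · rintro ⟨i, j, hij, hji, rfl, rfl⟩
    exact ⟨hji, i, j, hij, rfl, rfl⟩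

lemma wle_iff_invPairs_subset {σ π : Equiv.Perm (Fin m)} :
    wle σ π ↔ invPairs (ofFn σ) ⊆ invPairs (ofFn π) := by
  simp only [wle, Set.subset_def, List.subset_def, mem_invPairs_ofFn]

lemma contains132_of_ofFn {σ : Equiv.Perm (Fin m)} (h : Contains132 (ofFn σ)) : contains132 σ := by
  obtain ⟨a, b, c, hab, hbc, hs⟩ := h
  obtain ⟨i, j, k, hij, hjk, rfl, rfl, rfl⟩ := triple_sublist_ofFn_iff.1 hs
  exact ⟨i, j, k, hij, hjk, hab, hbc⟩

lemma exists_ofFn_eq_of_perm {σ : Equiv.Perm (Fin m)} {w : List (Fin m)} (h : w ~ ofFn σ) :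
    ∃ τ : Equiv.Perm (Fin m), ofFn τ = w := by
  have hlen : w.length = m := by simpa using h.length_eq
  have hnd : w.Nodup := h.nodup_iff.2 (nodup_ofFn.2 σ.injective)
  set f : Fin m → Fin m := fun i => w.get (i.cast hlen.symm)
  have hf : f.Injective := fun i j hij => by
    simpa [Fin.ext_iff] using hnd.injective_get hij
  refine ⟨Equiv.ofBijective f (Finite.injective_iff_bijective.1 hf), ?_⟩
  apply ext_getElem (by simp [hlen])
  intro k _ _
  simp [f]

lemma invCount_ofFn_mul_simpleT_of_lt {σ : Equiv.Perm (Fin (n + 1))} {i : Fin n}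
    (h : σ i.castSucc < σ i.succ) :
    invCount (ofFn (σ * simpleT i)) = invCount (ofFn σ) + 1 := by
  obtain ⟨l₁, l₂, h₁, h₂⟩ := ofFn_comp_swap σ i
  rw [Equiv.Perm.coe_mul, simpleT, h₂, h₁, invCount_append_cons_cons _ _ h]

lemma invCount_ofFn_mul_simpleT_of_gt {σ : Equiv.Perm (Fin (n + 1))} {i : Fin n}
    (h : σ i.succ < σ i.castSucc) :
    invCount (ofFn σ) = invCount (ofFn (σ * simpleT i)) + 1 := by
  obtain ⟨l₁, l₂, h₁, h₂⟩ := ofFn_comp_swap σ i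
  rw [Equiv.Perm.coe_mul, simpleT, h₂, h₁, invCount_append_cons_cons _ _ h]

lemma invCount_ofFn_prod_le (l : List (Fin n)) :
    invCount (ofFn (l.map simpleT).prod) ≤ l.length := by
  induction l using reverseRecOn with
  | nil => exact (invCount_ofFn_of_strictMono strictMono_id).le
  | append_singleton l i ih =>
    rw [map_append, prod_append, map_singleton, prod_singleton, length_append, length_singleton]
    generalize (l.map simpleT).prod = σ at ih ⊢
    rcases (σ.injective.ne (Fin.castSucc_lt_succ (i := i)).ne).lt_or_gt with h | h
    · rw [invCount_ofFn_mul_simpleT_of_lt h]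
      omega
    · have := invCount_ofFn_mul_simpleT_of_gt h
      omega

lemma eq_one_of_strictMono {σ : Equiv.Perm (Fin m)} (h : StrictMono σ) : σ = 1 := by
  ext x
  simpa using Fin.coe_orderIso_apply (StrictMono.orderIsoOfSurjective σ h σ.surjective) x

lemma exists_descent_of_not_strictMono {σ : Equiv.Perm (Fin (n + 1))} (h : ¬StrictMono σ) :
    ∃ i : Fin n, σ i.succ < σ i.castSucc := by
  simp only [Fin.strictMono_iff_lt_succ, not_forall, not_lt] at h
  obtain ⟨i, hi⟩ := h
  exact ⟨i, hi.lt_of_ne (σ.injective.ne (Fin.castSucc_lt_succ (i := i)).ne')⟩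

lemma exists_word_length_eq_invCount (σ : Equiv.Perm (Fin (n + 1))) :
    ∃ l : List (Fin n), l.length = invCount (ofFn σ) ∧ (l.map simpleT).prod = σ := by
  induction hk : invCount (ofFn σ) generalizing σ with
  | zero =>
    have hmono : StrictMono σ := by
      by_contra h
      obtain ⟨i, hi⟩ := exists_descent_of_not_strictMono h
      have := invCount_ofFn_mul_simpleT_of_gt hi
      omega
    exact ⟨[], rfl, (eq_one_of_strictMono hmono).symm⟩
  | succ k ih =>
    obtain ⟨i, hi⟩ := exists_descent_of_not_strictMono (σ := σ) fun h => by
      rw [invCount_ofFn_of_strictMono h] at hk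
      omega
    obtain ⟨l, hl, hprod⟩ := ih (σ * simpleT i) (by
      have := invCount_ofFn_mul_simpleT_of_gt hi
      omega)
    refine ⟨l ++ [i], by simp [hl], ?_⟩
    rw [map_append, prod_append, hprod, map_singleton, prod_singleton, mul_assoc, simpleT,
      swap_mul_self, mul_one]

theorem len_eq_invCount (σ : Equiv.Perm (Fin (n + 1))) : len σ = invCount (ofFn σ) := by
  obtain ⟨l, hl, hprod⟩ := exists_word_length_eq_invCount σ
  refine le_antisymm (Nat.sInf_le ⟨l, hl, hprod⟩) (le_csInf ⟨_, l, hl, hprod⟩ ?_)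
  rintro k ⟨l', rfl, rfl⟩
  exact invCount_ofFn_prod_le l'

lemma ofFn_perm_ofFn (σ π : Equiv.Perm (Fin m)) : ofFn σ ~ ofFn π :=
  (perm_ext_iff_of_nodup (nodup_ofFn.2 σ.injective) (nodup_ofFn.2 π.injective)).2 fun a => by
    simp only [mem_ofFn, σ.surjective a, π.surjective a]

lemma ncard_wle_eq_card_filter (π : Equiv.Perm (Fin (n + 1))) (P : ℕ → Prop) [DecidablePred P] :
    {σ : Equiv.Perm (Fin (n + 1)) | wle σ π ∧ P (len σ)}.ncard =
      ((lowerInterval (ofFn π)).filter fun w => P (invCount w)).card := by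
  rw [← Set.ncard_image_of_injective _ (ofFn_injective.comp DFunLike.coe_injective),
    ← Set.ncard_coe_finset]
  congr 1
  ext w
  simp only [Set.mem_image, Set.mem_ofPred_eq, Finset.coe_filter, mem_lowerInterval,
    wle_iff_invPairs_subset, len_eq_invCount, Function.comp_apply]
  constructor
  · rintro ⟨σ, hσ, rfl⟩
    exact ⟨⟨ofFn_perm_ofFn σ π, hσ.1⟩, hσ.2⟩
  · rintro ⟨⟨hperm, hle⟩, hP⟩
    obtain ⟨τ, rfl⟩ := exists_ofFn_eq_of_perm hperm
    exact ⟨τ, ⟨hle, hP⟩, rfl⟩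

end Permutations

end RankSymmetry

open RankSymmetry

/-- The weak-order interval `[e, π]` below a 132-avoiding permutation is rank-symmetric:
the number of elements of length `r` equals the number of elements of length `ℓ(π) - r`. -/
theorem interval_rank_symmetric {n : ℕ} (π : Equiv.Perm (Fin (n+1)))
    (hπ : ¬ contains132 π) (r : ℕ) :
    {σ : Equiv.Perm (Fin (n+1)) | wle σ π ∧ len σ = r}.ncard =
      {σ : Equiv.Perm (Fin (n+1)) | wle σ π ∧ len σ + r = len π}.ncard := by
  rw [ncard_wle_eq_card_filter π (· = r), ncard_wle_eq_card_filter π (· + r = len π),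
    len_eq_invCount]
  exact (isPalindromic_rankPoly (List.nodup_ofFn.2 π.injective)
    (mt contains132_of_ofFn hπ)).card_filter_eq r
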